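/- Let q be a real number with 0 < q < 1 and let z ∈ ℂ with −1 < Re(z) < 1. Then the sequence (p_n(z))_{n ∈ ℕ} is square summable: Σ_{n=0}^{∞} |p_n(z)|² < ∞. -/

import Mathlib

/-- The q-Pochhammer symbol `(x; q)_k = ∏_{j=0}^{k-1} (1 - x q^j)`. -/
noncomputable def qPoch (x q : ℝ) (k : ℕ) : ℝ := ∏ j ∈ Finset.range k, (1 - x * q ^ j)

/-- The q-binomial coefficient `[n, k]_q = (q; q)_n / ((q; q)_k (q; q)_{n-k})`. -/
noncomputable def qbinom (q : ℝ) (n k : ℕ) : ℝ :=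
  qPoch q q n / (qPoch q q k * qPoch q q (n - k))

/-- `q^z = exp(z · log q)` for a real `q > 0` and complex `z`. -/
noncomputable def cpw (q : ℝ) (z : ℂ) : ℂ := Complex.exp (z * (Real.log q : ℂ))

/-- `p_n(z) = (q^n / √((q²; q²)_n)) · Σ_{k=0}^{n} [n, k]_{q²} · q^{z(n-2k)}`. -/
noncomputable def pfun (q : ℝ) (n : ℕ) (z : ℂ) : ℂ :=
  ((q ^ n / Real.sqrt (qPoch (q ^ 2) (q ^ 2) n) : ℝ) : ℂ) *
    ∑ k ∈ Finset.range (n + 1),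
      (qbinom (q ^ 2) n k : ℂ) * cpw q (z * ((n : ℂ) - 2 * (k : ℂ)))

/-! For `0 ≤ x < 1` and `0 ≤ r < 1`, the bound `log (1 - y) ≥ -y / (1 - y)` applied to each factor
gives `(x; r)_m ≥ exp (-x / ((1 - x) (1 - r))) > 0` for all `m`, while trivially `(x; r)_m ≤ 1`.
Hence the `q²`-binomial coefficients are bounded uniformly in `n` and `k`. Since
`|Re (z (n - 2k))| ≤ |Re z| n`, each of the `n + 1` terms of the sum in `p_n(z)` is
`O(q^(-|Re z| n))`, so `|p_n(z)| = O((n + 1) s^n)` with `s = q^(1 - |Re z|) < 1`, and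
`(n + 1)² s^(2n)` is summable. -/

open Real Finset

section QPochhammer

variable {x r : ℝ}

lemma qPoch_pos (hx0 : 0 ≤ x) (hx1 : x < 1) (hr0 : 0 ≤ r) (hr1 : r ≤ 1) (n : ℕ) :
    0 < qPoch x r n :=
  prod_pos fun j _ => by
    have := mul_le_of_le_one_right hx0 (pow_le_one₀ hr0 hr1 (n := j))
    linarith

lemma qPoch_le_one (hx0 : 0 ≤ x) (hx1 : x ≤ 1) (hr0 : 0 ≤ r) (hr1 : r ≤ 1) (n : ℕ) :
    qPoch x r n ≤ 1 :=
  prod_le_one (fun j _ => sub_nonneg.2 (mul_le_one₀ hx1 (pow_nonneg hr0 j) (pow_le_one₀ hr0 hr1)))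
    (fun j _ => sub_le_self _ (mul_nonneg hx0 (pow_nonneg hr0 j)))

lemma exp_neg_div_one_sub_le_one_sub {y : ℝ} (hy : y < 1) : exp (-(y / (1 - y))) ≤ 1 - y := by
  have hy' : 0 < 1 - y := by linarith
  calc exp (-(y / (1 - y))) ≤ exp (log (1 - y)) := by
        refine exp_le_exp.2 ((le_of_eq ?_).trans (one_sub_inv_le_log_of_pos hy'))
        field_simp
        ring
    _ = 1 - y := exp_log hy'

lemma exp_neg_le_qPoch (hx0 : 0 ≤ x) (hx1 : x < 1) (hr0 : 0 ≤ r) (hr1 : r < 1) (n : ℕ) :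
    exp (-(x / ((1 - x) * (1 - r)))) ≤ qPoch x r n := by
  have hx' : 0 < 1 - x := by linarith
  have hfactor (j : ℕ) : exp (-(x * r ^ j / (1 - x))) ≤ 1 - x * r ^ j := by
    have hy : x * r ^ j ≤ x := mul_le_of_le_one_right hx0 (pow_le_one₀ hr0 hr1.le)
    calc exp (-(x * r ^ j / (1 - x))) ≤ exp (-(x * r ^ j / (1 - x * r ^ j))) := by
          gcongr
      _ ≤ 1 - x * r ^ j := exp_neg_div_one_sub_le_one_sub (by linarith)
  have hgeom : ∑ j ∈ range n, x * r ^ j / (1 - x) ≤ x / ((1 - x) * (1 - r)) :=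
    calc ∑ j ∈ range n, x * r ^ j / (1 - x) = x * (∑ j ∈ range n, r ^ j) / (1 - x) := by
          rw [mul_sum, sum_div]
      _ ≤ x * (1 / (1 - r)) / (1 - x) := by
          gcongr
          simpa only [range_eq_Ico, pow_zero] using geom_sum_Ico_le_of_lt_one (m := 0) (n := n) hr0 hr1
      _ = x / ((1 - x) * (1 - r)) := by field_simp
  calc exp (-(x / ((1 - x) * (1 - r)))) ≤ exp (∑ j ∈ range n, -(x * r ^ j / (1 - x))) := by
        rw [sum_neg_distrib]
        exact exp_le_exp.2 (neg_le_neg hgeom)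
    _ = ∏ j ∈ range n, exp (-(x * r ^ j / (1 - x))) := exp_sum _ _
    _ ≤ qPoch x r n := prod_le_prod (fun j _ => (exp_pos _).le) (fun j _ => hfactor j)

lemma qbinom_nonneg (hr0 : 0 ≤ r) (hr1 : r < 1) (n k : ℕ) : 0 ≤ qbinom r n k := by
  unfold qbinom
  have := qPoch_pos hr0 hr1 hr0 hr1.le n
  have := qPoch_pos hr0 hr1 hr0 hr1.le k
  have := qPoch_pos hr0 hr1 hr0 hr1.le (n - k)
  positivity

lemma qbinom_le (hr0 : 0 ≤ r) (hr1 : r < 1) (n k : ℕ) :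
    qbinom r n k ≤ exp (r / ((1 - r) * (1 - r))) ^ 2 := by
  have hlow (m : ℕ) := exp_neg_le_qPoch hr0 hr1 hr0 hr1 m
  calc qbinom r n k ≤ 1 / (exp (-(r / ((1 - r) * (1 - r)))) * exp (-(r / ((1 - r) * (1 - r))))) :=
        div_le_div₀ zero_le_one (qPoch_le_one hr0 hr1.le hr0 hr1.le n) (by positivity)
          (mul_le_mul (hlow k) (hlow (n - k)) (exp_pos _).le (qPoch_pos hr0 hr1 hr0 hr1.le k).le)
    _ = exp (r / ((1 - r) * (1 - r))) ^ 2 := by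
        rw [exp_neg]
        field_simp

end QPochhammer

section ComplexPower

variable {q : ℝ}

lemma norm_cpw (hq : 0 < q) (w : ℂ) : ‖cpw q w‖ = q ^ w.re := by
  rw [cpw, Complex.norm_exp, rpow_def_of_pos hq, mul_comm (log q)]
  simp

lemma norm_cpw_mul_ofReal_le (hq0 : 0 < q) (hq1 : q ≤ 1) (z : ℂ) {x m : ℝ} (hx : |x| ≤ m) :
    ‖cpw q (z * x)‖ ≤ q ^ (-(|z.re| * m)) := by
  rw [norm_cpw hq0, Complex.re_mul_ofReal]
  refine rpow_le_rpow_of_exponent_ge hq0 hq1 ?_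
  have : |z.re * x| ≤ |z.re| * m := by
    rw [abs_mul]
    exact mul_le_mul_of_nonneg_left hx (abs_nonneg _)
  linarith [neg_abs_le (z.re * x)]

end ComplexPower

lemma norm_sum_qbinom_mul_cpw_le {q r : ℝ} (hq0 : 0 < q) (hq1 : q ≤ 1) (hr0 : 0 ≤ r) (hr1 : r < 1)
    (z : ℂ) (n : ℕ) :
    ‖∑ k ∈ range (n + 1), (qbinom r n k : ℂ) * cpw q (z * ((n : ℂ) - 2 * (k : ℂ)))‖ ≤
      (n + 1) * (exp (r / ((1 - r) * (1 - r))) ^ 2 * q ^ (-(|z.re| * n))) := by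
  have hterm : ∀ k ∈ range (n + 1), ‖(qbinom r n k : ℂ) * cpw q (z * ((n : ℂ) - 2 * (k : ℂ)))‖ ≤
      exp (r / ((1 - r) * (1 - r))) ^ 2 * q ^ (-(|z.re| * n)) := fun k hk => by
    have hkn : (k : ℝ) ≤ n := by exact_mod_cast mem_range_succ_iff.1 hk
    have hcast : (n : ℂ) - 2 * (k : ℂ) = ((n - 2 * k : ℝ) : ℂ) := by push_cast; ring
    rw [norm_mul, Complex.norm_real, norm_of_nonneg (qbinom_nonneg hr0 hr1 n k), hcast]
    refine mul_le_mul (qbinom_le hr0 hr1 n k) (norm_cpw_mul_ofReal_le hq0 hq1 z ?_)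
      (norm_nonneg _) (by positivity)
    rw [abs_le]
    constructor <;> linarith
  calc _ ≤ ∑ k ∈ range (n + 1), ‖(qbinom r n k : ℂ) * cpw q (z * ((n : ℂ) - 2 * (k : ℂ)))‖ :=
        norm_sum_le _ _
    _ ≤ ∑ _k ∈ range (n + 1), exp (r / ((1 - r) * (1 - r))) ^ 2 * q ^ (-(|z.re| * n)) :=
        sum_le_sum hterm
    _ = _ := by simp

lemma exists_norm_pfun_le {q : ℝ} (hq0 : 0 < q) (hq1 : q < 1) (z : ℂ) :
    ∃ C, ∀ n : ℕ, ‖pfun q n z‖ ≤ C * (n + 1) * (q ^ (1 - |z.re|)) ^ n := by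
  have hr0 : 0 ≤ q ^ 2 := sq_nonneg q
  have hr1 : q ^ 2 < 1 := by nlinarith
  set a := q ^ 2 / ((1 - q ^ 2) * (1 - q ^ 2))
  refine ⟨exp a ^ 2 / √(exp (-a)), fun n => ?_⟩
  have hpow : q ^ n * q ^ (-(|z.re| * n)) = (q ^ (1 - |z.re|)) ^ n := by
    rw [← rpow_natCast, ← rpow_natCast (q ^ _), ← rpow_mul hq0.le, ← rpow_add hq0]
    ring_nf
  calc ‖pfun q n z‖ = q ^ n / √(qPoch (q ^ 2) (q ^ 2) n) *
        ‖∑ k ∈ range (n + 1), (qbinom (q ^ 2) n k : ℂ) * cpw q (z * ((n : ℂ) - 2 * (k : ℂ)))‖ := by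
        rw [pfun, norm_mul, Complex.norm_real, norm_of_nonneg (by positivity)]
    _ ≤ q ^ n / √(exp (-a)) * ((n + 1) * (exp a ^ 2 * q ^ (-(|z.re| * n)))) := by
        gcongr
        · exact exp_neg_le_qPoch hr0 hr1 hr0 hr1 n
        · exact norm_sum_qbinom_mul_cpw_le hq0 hq1.le hr0 hr1 z n
    _ = exp a ^ 2 / √(exp (-a)) * (n + 1) * (q ^ n * q ^ (-(|z.re| * n))) := by ring
    _ = _ := by rw [hpow]

lemma summable_succ_sq_mul_geometric {x : ℝ} (hx0 : 0 ≤ x) (hx1 : x < 1) :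
    Summable fun n : ℕ => ((n : ℝ) + 1) ^ 2 * x ^ n := by
  have hsq : Summable fun n : ℕ => (n : ℝ) ^ 2 * x ^ n :=
    summable_pow_mul_geometric_of_norm_lt_one 2 (by rwa [norm_of_nonneg hx0])
  refine Summable.of_nonneg_of_le (fun n => by positivity) (fun n => ?_)
    ((hsq.mul_left 2).add ((summable_geometric_of_lt_one hx0 hx1).mul_left 2))
  have : ((n : ℝ) + 1) ^ 2 ≤ 2 * (n : ℝ) ^ 2 + 2 := by nlinarith [sq_nonneg ((n : ℝ) - 1)]
  calc ((n : ℝ) + 1) ^ 2 * x ^ n ≤ (2 * (n : ℝ) ^ 2 + 2) * x ^ n := by gcongr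
    _ = _ := by ring

theorem stmt7 (q : ℝ) (hq0 : 0 < q) (hq1 : q < 1) (z : ℂ)
    (hz0 : -1 < z.re) (hz1 : z.re < 1) :
    Summable (fun n : ℕ => ‖pfun q n z‖ ^ 2) := by
  obtain ⟨C, hC⟩ := exists_norm_pfun_le hq0 hq1 z
  set s := q ^ (1 - |z.re|)
  have hs0 : 0 < s := rpow_pos_of_pos hq0 _
  have hs1 : s < 1 := rpow_lt_one hq0.le hq1 (by linarith [abs_lt.2 ⟨hz0, hz1⟩])
  refine Summable.of_nonneg_of_le (fun n => by positivity) (fun n => ?_)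
    ((summable_succ_sq_mul_geometric (sq_nonneg s) (by nlinarith)).mul_left (C ^ 2))
  calc ‖pfun q n z‖ ^ 2 ≤ (C * (n + 1) * s ^ n) ^ 2 := pow_le_pow_left₀ (norm_nonneg _) (hC n) 2
    _ = C ^ 2 * (((n : ℝ) + 1) ^ 2 * (s ^ 2) ^ n) := by ring
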